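/- arXiv:1705.03433 — 3 statements merged into one kernel-verified Lean document; each statement's English description precedes it below -/
import Mathlib

section
/- Let I = ker ε_* where ε_* : (ℂ[X])* → ℂ is evaluation at 1 (the augmentation of the convolution algebra). Then for every n ≥ 1, the isomorphism Θ : (ℂ[X])* → ℂ[[Z]], f ↦ Σ_k f(X^k/k!) Z^k, maps I^n bijectively onto the ideal ⟨Z^n⟩ of ℂ[[Z]]. -/
open Polynomial PowerSeries Finset

noncomputable section

/-- The full linear dual of the polynomial algebra `ℂ[X]`. -/
abbrev DualP : Type := Module.Dual ℂ (Polynomial ℂ)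

/-- The linear isomorphism `Φ : ℂ^ℕ → (ℂ[X])*`, `Φ z (X^m) = z m`. -/
noncomputable def Phi : (ℕ → ℂ) ≃ₗ[ℂ] DualP :=
  (Polynomial.basisMonomials ℂ).constr ℂ

lemma Phi_apply (z : ℕ → ℂ) (m : ℕ) : Phi z ((X : Polynomial ℂ) ^ m) = z m := by
  have h : ((X : Polynomial ℂ) ^ m) = Polynomial.basisMonomials ℂ m := by
    simp [coe_basisMonomials, X_pow_eq_monomial]
  rw [h, Phi, Module.Basis.constr_basis]

/-- The underlying bijection of `Θ : (ℂ[X])* → ℂ[[Z]]`, `f ↦ ∑ₖ f(Xᵏ/k!) Zᵏ`. -/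
noncomputable def eTheta : DualP ≃ PowerSeries ℂ where
  toFun f := PowerSeries.mk fun k => f ((X : Polynomial ℂ) ^ k) / (k.factorial : ℂ)
  invFun φ := Phi fun n => (n.factorial : ℂ) * PowerSeries.coeff n φ
  left_inv f := by
    refine (Polynomial.basisMonomials ℂ).ext fun n => ?_
    have h : Polynomial.basisMonomials ℂ n = ((X : Polynomial ℂ) ^ n) := by
      simp [coe_basisMonomials, X_pow_eq_monomial]
    rw [h, Phi_apply]
    have hn : ((n.factorial : ℂ)) ≠ 0 := by
      exact_mod_cast Nat.factorial_ne_zero n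
    rw [PowerSeries.coeff_mk]
    field_simp
  right_inv φ := by
    ext n
    rw [PowerSeries.coeff_mk, Phi_apply]
    have hn : ((n.factorial : ℂ)) ≠ 0 := by
      exact_mod_cast Nat.factorial_ne_zero n
    field_simp

lemma eTheta_apply (f : DualP) :
    eTheta f = PowerSeries.mk fun k => f ((X : Polynomial ℂ) ^ k) / (k.factorial : ℂ) := rfl

lemma eTheta_symm_apply_pow (φ : PowerSeries ℂ) (n : ℕ) :
    eTheta.symm φ ((X : Polynomial ℂ) ^ n) = (n.factorial : ℂ) * PowerSeries.coeff n φ :=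
  Phi_apply _ n

lemma eTheta_add (f g : DualP) : eTheta (f + g) = eTheta f + eTheta g := by
  ext n
  simp [eTheta_apply, add_div]

lemma eTheta_smul (c : ℂ) (f : DualP) : eTheta (c • f) = c • eTheta f := by
  ext n
  simp [eTheta_apply, mul_div_assoc]

lemma eTheta_symm_add (x y : PowerSeries ℂ) :
    eTheta.symm (x + y) = eTheta.symm x + eTheta.symm y := by
  apply eTheta.injective
  rw [eTheta_add, eTheta.apply_symm_apply, eTheta.apply_symm_apply, eTheta.apply_symm_apply]

lemma eTheta_symm_smul (c : ℂ) (x : PowerSeries ℂ) :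
    eTheta.symm (c • x) = c • eTheta.symm x := by
  apply eTheta.injective
  rw [eTheta_smul, eTheta.apply_symm_apply, eTheta.apply_symm_apply]

/-- The convolution (Hurwitz) ring structure on `(ℂ[X])*`, transported through `Θ`.
By `mul_apply_pow` below, the product is precisely the convolution product
`(f*g)(Xⁿ) = ∑ₖ (n choose k) f(Xᵏ) g(Xⁿ⁻ᵏ)`. -/
noncomputable instance : CommRing DualP :=
  { (inferInstance : AddCommGroup DualP) with
    mul := fun f g => eTheta.symm (eTheta f * eTheta g)
    one := eTheta.symm 1
    mul_assoc := fun a b c => by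
      show eTheta.symm (eTheta (eTheta.symm _) * _) = eTheta.symm (_ * eTheta (eTheta.symm _))
      rw [eTheta.apply_symm_apply, eTheta.apply_symm_apply, mul_assoc]
    one_mul := fun a => by
      show eTheta.symm (eTheta (eTheta.symm 1) * eTheta a) = a
      rw [eTheta.apply_symm_apply, one_mul, eTheta.symm_apply_apply]
    mul_one := fun a => by
      show eTheta.symm (eTheta a * eTheta (eTheta.symm 1)) = a
      rw [eTheta.apply_symm_apply, mul_one, eTheta.symm_apply_apply]
    left_distrib := fun a b c => by
      show eTheta.symm (eTheta a * eTheta (b + c)) = eTheta.symm _ + eTheta.symm _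
      rw [eTheta_add, mul_add, eTheta_symm_add]
    right_distrib := fun a b c => by
      show eTheta.symm (eTheta (a + b) * eTheta c) = eTheta.symm _ + eTheta.symm _
      rw [eTheta_add, add_mul, eTheta_symm_add]
    zero_mul := fun a => by
      show eTheta.symm (eTheta 0 * eTheta a) = 0
      have h0 : eTheta (0 : DualP) = 0 := by
        ext n; simp [eTheta_apply]
      rw [h0, zero_mul, ← h0, eTheta.symm_apply_apply]
    mul_zero := fun a => by
      show eTheta.symm (eTheta a * eTheta 0) = 0
      have h0 : eTheta (0 : DualP) = 0 := by
        ext n; simp [eTheta_apply]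
      rw [h0, mul_zero, ← h0, eTheta.symm_apply_apply]
    mul_comm := fun a b => by
      show eTheta.symm (eTheta a * eTheta b) = eTheta.symm (eTheta b * eTheta a)
      rw [mul_comm] }

lemma mul_def (f g : DualP) : f * g = eTheta.symm (eTheta f * eTheta g) := rfl

noncomputable instance : Algebra ℂ DualP :=
  Algebra.ofModule
    (fun c f g => by
      rw [mul_def, mul_def, eTheta_smul, smul_mul_assoc, eTheta_symm_smul])
    (fun c f g => by
      rw [mul_def, mul_def, eTheta_smul, mul_smul_comm, eTheta_symm_smul])

/-- The product on `(ℂ[X])*` is the convolution product. -/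
lemma mul_apply_pow (f g : DualP) (n : ℕ) :
    (f * g) ((X : Polynomial ℂ) ^ n)
      = ∑ k ∈ Finset.range (n + 1),
          (n.choose k : ℂ) * f ((X : Polynomial ℂ) ^ k) * g ((X : Polynomial ℂ) ^ (n - k)) := by
  rw [mul_def, eTheta_symm_apply_pow, PowerSeries.coeff_mul,
    Finset.Nat.sum_antidiagonal_eq_sum_range_succ_mk, Finset.mul_sum]
  refine Finset.sum_congr rfl fun k hk => ?_
  have hk' : k ≤ n := Nat.lt_succ_iff.mp (Finset.mem_range.mp hk)
  rw [eTheta_apply, eTheta_apply, PowerSeries.coeff_mk, PowerSeries.coeff_mk,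
    Nat.cast_choose ℂ hk']
  have h1 : ((k.factorial : ℂ)) ≠ 0 := by exact_mod_cast Nat.factorial_ne_zero k
  have h2 : (((n - k).factorial : ℂ)) ≠ 0 := by exact_mod_cast Nat.factorial_ne_zero (n - k)
  field_simp

lemma one_apply_pow (n : ℕ) :
    (1 : DualP) ((X : Polynomial ℂ) ^ n) = if n = 0 then 1 else 0 := by
  show eTheta.symm 1 _ = _
  rw [eTheta_symm_apply_pow, PowerSeries.coeff_one]
  split <;> simp_all [Nat.factorial]

lemma mul_apply_one (f g : DualP) : (f * g) (1 : Polynomial ℂ) = f 1 * g 1 := by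
  have := mul_apply_pow f g 0
  simpa using this

/-- The augmentation ideal `I = ker ε₊` of `(ℂ[X])*`, where `ε₊(f) = f(1)`. -/
noncomputable def Iaug : Ideal DualP where
  carrier := {f | f (1 : Polynomial ℂ) = 0}
  add_mem' := by
    intro a b ha hb
    simp only [Set.mem_setOf_eq] at *
    simp [ha, hb]
  zero_mem' := by simp
  smul_mem' := by
    intro c f hf
    simp only [Set.mem_setOf_eq] at *
    rw [smul_eq_mul, mul_apply_one, hf, mul_zero]

lemma mem_Iaug_iff (f : DualP) : f ∈ Iaug ↔ f (1 : Polynomial ℂ) = 0 := Iff.rfl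

/-- `ξ ∈ (ℂ[X])*`, `ξ(Xⁿ) = δ_{n,1}`. -/
noncomputable def xiD : DualP := Phi fun n => if n = 1 then 1 else 0

/-- `φ_λ : ℂ[X] → ℂ`, the algebra map with `φ_λ(X) = λ`, i.e. evaluation at `λ`. -/
noncomputable def phiL (l : ℂ) : DualP := (Polynomial.aeval l).toLinearMap

lemma phiL_apply (l : ℂ) (p : Polynomial ℂ) : phiL l p = Polynomial.aeval l p := rfl

/-- Membership in the finite (Sweedler) dual `ℂ[X]°`: vanishing on a non-zero ideal. -/
def IsFinDual (f : DualP) : Prop :=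
  ∃ I : Ideal (Polynomial ℂ), I ≠ ⊥ ∧ ∀ p ∈ I, f p = 0

/-- The `n`-th power `Jⁿ` of the augmentation ideal `J` of the finite dual `ℂ[X]°`,
described as a set: the additive closure of products of `n` elements of `J`. -/
noncomputable def JpowSet (n : ℕ) : AddSubmonoid DualP :=
  AddSubmonoid.closure
    {y | ∃ g : Fin n → DualP,
      (∀ i, IsFinDual (g i) ∧ g i (1 : Polynomial ℂ) = 0) ∧ y = ∏ i, g i}

end

/-- `Θ : (ℂ[X])* → ℂ[[Z]]`, `f ↦ ∑ₖ f(Xᵏ/k!) Zᵏ`. -/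
noncomputable def ThetaFun (f : DualP) : PowerSeries ℂ :=
  PowerSeries.mk fun k => f (((k.factorial : ℂ))⁻¹ • (X : Polynomial ℂ) ^ k)

/-! Since the convolution product on `(ℂ[X])*` is transported from `ℂ[[Z]]`, `Θ` is a ring
isomorphism. Its constant coefficient is `ε₊`, so it carries `I` onto `⟨Z⟩ = ker constantCoeff`;
a ring isomorphism maps ideals bijectively onto their images and commutes with powers of ideals,
so `Iⁿ` goes onto `⟨Z⟩ⁿ = ⟨Zⁿ⟩`. -/

lemma RingEquiv.bijOn_ideal_map {R S : Type*} [Semiring R] [Semiring S] (e : R ≃+* S)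
    (I : Ideal R) : Set.BijOn e I (I.map e) := by
  rw [← Ideal.comap_symm, Ideal.coe_comap]
  convert e.injective.injOn.bijOn_image
  exact (e.toEquiv.image_eq_preimage_symm _).symm

noncomputable def ThetaRingEquiv : DualP ≃+* PowerSeries ℂ where
  toEquiv := eTheta
  map_add' := eTheta_add
  map_mul' f g := by
    rw [mul_def]
    exact eTheta.apply_symm_apply _

lemma coe_ThetaRingEquiv : ⇑ThetaRingEquiv = ThetaFun := by
  funext f
  ext k
  simp [ThetaRingEquiv, ThetaFun, eTheta_apply, div_eq_inv_mul]

lemma constantCoeff_ThetaFun (f : DualP) : constantCoeff (ThetaFun f) = f 1 := by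
  simp [ThetaFun]

lemma Iaug_eq_comap_span_X :
    Iaug = (Ideal.span {(PowerSeries.X : PowerSeries ℂ)}).comap ThetaRingEquiv := by
  ext f
  rw [Ideal.mem_comap, Ideal.mem_span_singleton, PowerSeries.X_dvd_iff, coe_ThetaRingEquiv,
    constantCoeff_ThetaFun, mem_Iaug_iff]

lemma map_Iaug_pow (n : ℕ) :
    (Iaug ^ n).map ThetaRingEquiv = Ideal.span {(PowerSeries.X : PowerSeries ℂ) ^ n} := by
  rw [Ideal.map_pow, Iaug_eq_comap_span_X,
    Ideal.map_comap_of_surjective _ ThetaRingEquiv.surjective, Ideal.span_singleton_pow]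

/-- For `n ≥ 1`, `Θ` maps `Iⁿ` bijectively onto the ideal `⟨Zⁿ⟩` of `ℂ[[Z]]`. -/
theorem Theta_maps_In_onto_Zn :
    ∀ n : ℕ, 1 ≤ n →
      Set.BijOn ThetaFun
        ((Iaug ^ n : Ideal DualP) : Set DualP)
        ((Ideal.span {(PowerSeries.X : PowerSeries ℂ) ^ n} : Ideal (PowerSeries ℂ)) :
          Set (PowerSeries ℂ)) := by
  intro n _
  rw [← map_Iaug_pow, ← coe_ThetaRingEquiv]
  exact ThetaRingEquiv.bijOn_ideal_map _
end

section
/- Let J be the augmentation ideal of ℂ[X]° (kernel of evaluation at 1 restricted to the finite dual), and let ε, φ_1, ξ ∈ ℂ[X]° be as above. Then φ_1 - ε ∉ J², even though φ_1 - ε - ξ lies in I² ∩ ℂ[X]° where I is the augmentation ideal of (ℂ[X])*. Consequently J² ⊊ I² ∩ ℂ[X]°. -/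
open Polynomial PowerSeries Finset

/-!
The elements `φ_μ ξ^j : p ↦ p^{(j)}(μ)` span the finite dual `ℂ[X]°` and are linearly independent,
so the monoid algebra of `ℂ × ℕ` maps isomorphically onto `ℂ[X]°` by `(μ, j) ↦ φ_μ ξ^j`.
Independence comes from the generalized eigenspaces of the transpose of multiplication by `X`,
in which `φ_μ ξ^j` has eigenvalue `μ`. Spanning is by induction on the roots of a nonzero
polynomial whose multiples the functional kills: the transpose of multiplication by `X - z` maps
the span of the `φ_μ ξ^j` onto itself and has kernel `ℂ φ_z`.

On the model, `(μ, j) ↦ 0^j (1 + μ ε)` is an algebra map to the dual numbers whose first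
component is the augmentation. It kills `J²` because `ε² = 0`, yet it sends both `φ_1 - ε` and
`φ_1 - ε - ξ` to `ε`. In the full dual no such obstruction exists: a functional vanishing on `1`
and `X` is `ξ` times an element of `I`, so `φ_1 - ε - ξ ∈ I²`.
-/

lemma DualP.ext_X_pow {f g : DualP} (h : ∀ n, f ((X : ℂ[X]) ^ n) = g ((X : ℂ[X]) ^ n)) : f = g :=
  (basisMonomials ℂ).ext fun n => by simpa [coe_basisMonomials, X_pow_eq_monomial] using h n

lemma phiL_apply_X_pow (μ : ℂ) (n : ℕ) : phiL μ ((X : ℂ[X]) ^ n) = μ ^ n := by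
  simp [phiL_apply]

lemma phiL_zero : phiL 0 = 1 :=
  DualP.ext_X_pow fun n => by rw [phiL_apply_X_pow, one_apply_pow, zero_pow_eq]

lemma phiL_add (μ ν : ℂ) : phiL (μ + ν) = phiL μ * phiL ν :=
  DualP.ext_X_pow fun n => by
    rw [phiL_apply_X_pow, mul_apply_pow, add_pow]
    exact Finset.sum_congr rfl fun k _ => by simp only [phiL_apply_X_pow]; ring

lemma xiD_apply_X_pow (n : ℕ) : xiD ((X : ℂ[X]) ^ n) = if n = 1 then 1 else 0 :=
  Phi_apply _ n

lemma xiD_apply_X : xiD (X : ℂ[X]) = 1 := by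
  simpa using xiD_apply_X_pow 1

lemma mul_xiD_apply_one (f : DualP) : (f * xiD) 1 = 0 := by
  rw [mul_apply_one, ← pow_zero (X : ℂ[X]), xiD_apply_X_pow]
  simp

lemma mul_xiD_apply_X_pow_succ (f : DualP) (n : ℕ) :
    (f * xiD) ((X : ℂ[X]) ^ (n + 1)) = (n + 1) * f ((X : ℂ[X]) ^ n) := by
  rw [mul_apply_pow, Finset.sum_eq_single n]
  · simp [xiD_apply_X]
  · intro k hk hkn
    have : n + 1 - k ≠ 1 := by have := Finset.mem_range.mp hk; omega
    simp [xiD_apply_X_pow, this]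
  · simp

lemma phiL_mul_xiD_pow_apply_X_pow (μ : ℂ) (j n : ℕ) :
    (phiL μ * xiD ^ j) ((X : ℂ[X]) ^ n) = n.descFactorial j * μ ^ (n - j) := by
  induction j generalizing n with
  | zero => simp [phiL_apply_X_pow]
  | succ j ih =>
    rw [pow_succ, ← mul_assoc]
    rcases n with _ | n
    · simp [mul_xiD_apply_one]
    · rw [mul_xiD_apply_X_pow_succ, ih, Nat.succ_descFactorial_succ, Nat.succ_sub_succ]
      push_cast
      ring

lemma phiL_mul_xiD_pow_apply (μ : ℂ) (j : ℕ) (p : ℂ[X]) :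
    (phiL μ * xiD ^ j) p = (Polynomial.derivative^[j] p).eval μ := by
  have : phiL μ * xiD ^ j = (Polynomial.leval μ).comp (Polynomial.derivative ^ j) := by
    refine DualP.ext_X_pow fun n => ?_
    simp [phiL_mul_xiD_pow_apply_X_pow, Module.End.pow_apply, iterate_derivative_X_pow_eq_smul]
  rw [this]
  simp [Module.End.pow_apply]

lemma phiL_mul_xiD_pow_apply_eq_zero {μ : ℂ} {j : ℕ} {p : ℂ[X]}
    (h : ((X : ℂ[X]) - Polynomial.C μ) ^ (j + 1) ∣ p) :
    (phiL μ * xiD ^ j) p = 0 := by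
  rw [phiL_mul_xiD_pow_apply, ← IsRoot, ← dvd_iff_isRoot]
  simpa using pow_sub_dvd_iterate_derivative_of_pow_dvd j h

lemma phiL_mul_xiD_pow_apply_X_sub_C_pow (μ : ℂ) (j k : ℕ) :
    (phiL μ * xiD ^ j) (((X : ℂ[X]) - Polynomial.C μ) ^ k)
      = if j = k then (k.factorial : ℂ) else 0 := by
  rw [phiL_mul_xiD_pow_apply, iterate_derivative_X_sub_pow]
  rcases lt_trichotomy j k with hjk | rfl | hjk
  · simp [hjk.ne, Nat.sub_ne_zero_of_lt hjk]
  · simp [Nat.descFactorial_self]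
  · simp [hjk.ne', Nat.descFactorial_eq_zero_iff_lt.mpr hjk]

lemma phiL_mul_xiD_pow_apply_X_mul (μ : ℂ) (j : ℕ) (p : ℂ[X]) :
    (phiL μ * xiD ^ j) ((X : ℂ[X]) * p)
      = μ * (phiL μ * xiD ^ j) p + j * (phiL μ * xiD ^ (j - 1)) p := by
  simp only [phiL_mul_xiD_pow_apply, mul_comm (X : ℂ[X]) p, iterate_derivative_mul_X, eval_add,
    eval_mul, eval_X, eval_natCast, nsmul_eq_mul]
  ring

noncomputable def augHom : DualP →ₐ[ℂ] ℂ where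
  toFun f := f 1
  map_one' := by simpa using one_apply_pow 0
  map_mul' := mul_apply_one
  map_zero' := rfl
  map_add' _ _ := rfl
  commutes' c := by
    simpa [Algebra.algebraMap_eq_smul_one] using congrArg (c * ·) (one_apply_pow 0)

lemma augHom_apply (f : DualP) : augHom f = f 1 := rfl

lemma one_apply_one : (1 : DualP) 1 = 1 :=
  map_one augHom

lemma one_apply_X : (1 : DualP) (X : ℂ[X]) = 0 := by
  simpa using one_apply_pow 1

lemma xiD_apply_one : xiD 1 = 0 := by
  simpa using xiD_apply_X_pow 0

lemma exists_eq_mul_xiD {f : DualP} (hf : f 1 = 0) :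
    ∃ w : DualP, f = w * xiD ∧ w 1 = f (X : ℂ[X]) := by
  refine ⟨Phi fun n => f ((X : ℂ[X]) ^ (n + 1)) / (n + 1), DualP.ext_X_pow fun n => ?_, ?_⟩
  · rcases n with _ | n
    · simpa [mul_xiD_apply_one] using hf
    · rw [mul_xiD_apply_X_pow_succ, Phi_apply]
      field_simp
  · simpa using Phi_apply (fun n => f ((X : ℂ[X]) ^ (n + 1)) / (n + 1)) 0

lemma mem_Iaug_sq_of_apply_one_of_apply_X {f : DualP} (h1 : f 1 = 0) (hX : f (X : ℂ[X]) = 0) :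
    f ∈ Iaug ^ 2 := by
  obtain ⟨w, rfl, hw⟩ := exists_eq_mul_xiD h1
  rw [pow_two]
  exact Ideal.mul_mem_mul (hw.trans hX) xiD_apply_one

lemma dualMap_mulLeft_sub_smul_pow_apply {R A : Type*} [CommRing R] [CommRing A] [Algebra R A]
    (a : A) (μ : R) (l : ℕ) (f : Module.Dual R A) (p : A) :
    (((LinearMap.mulLeft R a).dualMap - μ • 1) ^ l) f p = f ((a - algebraMap R A μ) ^ l * p) := by
  induction l generalizing f with
  | zero => simp
  | succ l ih =>
    rw [pow_succ, Module.End.mul_apply, ih,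
      show (a - algebraMap R A μ) ^ (l + 1) * p
        = a * ((a - algebraMap R A μ) ^ l * p) - μ • ((a - algebraMap R A μ) ^ l * p) by
          rw [Algebra.smul_def]; ring,
      map_sub, map_smul]
    simp

noncomputable def dualMulX : Module.End ℂ DualP := (LinearMap.mulLeft ℂ (X : ℂ[X])).dualMap

lemma dualMulX_sub_smul_pow_apply (μ : ℂ) (l : ℕ) (f : DualP) (p : ℂ[X]) :
    ((dualMulX - μ • 1) ^ l) f p = f (((X : ℂ[X]) - Polynomial.C μ) ^ l * p) :=
  dualMap_mulLeft_sub_smul_pow_apply _ _ _ _ _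

lemma dualMulX_sub_smul_apply (μ : ℂ) (f : DualP) (p : ℂ[X]) :
    (dualMulX - μ • 1) f p = f (((X : ℂ[X]) - Polynomial.C μ) * p) := by
  simpa using dualMulX_sub_smul_pow_apply μ 1 f p

lemma phiL_mul_xiD_pow_mem_maxGenEigenspace (μ : ℂ) (j : ℕ) :
    phiL μ * xiD ^ j ∈ dualMulX.maxGenEigenspace μ :=
  (Module.End.mem_maxGenEigenspace _ _ _).mpr
    ⟨j + 1, LinearMap.ext fun p => by
      rw [dualMulX_sub_smul_pow_apply, phiL_mul_xiD_pow_apply_eq_zero (dvd_mul_right _ _)]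
      rfl⟩

lemma dualMulX_sub_smul_phiL_mul_xiD_pow (z μ : ℂ) (j : ℕ) :
    (dualMulX - z • 1) (phiL μ * xiD ^ j)
      = (μ - z) • (phiL μ * xiD ^ j) + (j : ℂ) • (phiL μ * xiD ^ (j - 1)) := by
  refine LinearMap.ext fun p => ?_
  rw [dualMulX_sub_smul_apply, sub_mul, map_sub, phiL_mul_xiD_pow_apply_X_mul]
  simp only [LinearMap.add_apply, LinearMap.smul_apply, smul_eq_mul, Polynomial.C_mul', map_smul]
  ring

lemma eq_smul_phiL_of_dualMulX_sub_smul_eq_zero {z : ℂ} {f : DualP}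
    (h : (dualMulX - z • 1) f = 0) : f = f 1 • phiL z := by
  have hstep (n : ℕ) : f ((X : ℂ[X]) ^ (n + 1)) = z * f ((X : ℂ[X]) ^ n) := by
    have := LinearMap.congr_fun h ((X : ℂ[X]) ^ n)
    rw [dualMulX_sub_smul_apply, sub_mul, ← pow_succ', Polynomial.C_mul', map_sub, map_smul,
      LinearMap.zero_apply, sub_eq_zero] at this
    exact this
  refine DualP.ext_X_pow fun n => ?_
  simp only [LinearMap.smul_apply, smul_eq_mul, phiL_apply_X_pow]
  induction n with
  | zero => simp
  | succ n ih => rw [hstep, ih]; ring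

/-- The model `ℂG_a ⊗ ℂ[ξ]` of `ℂ[X]°`: the basis vector `(μ, j)` stands for `φ_μ ξ^j`, whose
image under `Θ` is the exponential monomial `e^{μZ} Z^j`. -/
abbrev ExpPoly : Type := AddMonoidAlgebra ℂ (ℂ × ℕ)

namespace ExpPoly

open DualNumber

noncomputable def toDual : ExpPoly →ₐ[ℂ] DualP :=
  AddMonoidAlgebra.lift ℂ DualP (ℂ × ℕ)
    { toFun := fun p => phiL p.toAdd.1 * xiD ^ p.toAdd.2
      map_one' := by simp [phiL_zero]
      map_mul' := fun p q => by
        simp only [toAdd_mul, Prod.fst_add, Prod.snd_add, phiL_add, pow_add]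
        ring }

lemma toDual_single (p : ℂ × ℕ) (a : ℂ) :
    toDual (AddMonoidAlgebra.single p a) = a • (phiL p.1 * xiD ^ p.2) :=
  AddMonoidAlgebra.lift_single _ _ _

lemma toDual_eq_sum (c : ExpPoly) :
    toDual c = ∑ q ∈ c.coeff.support, c.coeff q • (phiL q.1 * xiD ^ q.2) := by
  rw [toDual, AddMonoidAlgebra.lift_apply, Finsupp.sum]
  rfl

noncomputable def toDualNumber : ExpPoly →ₐ[ℂ] ℂ[ε] :=
  AddMonoidAlgebra.lift ℂ ℂ[ε] (ℂ × ℕ)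
    { toFun := fun p => (0 : ℂ) ^ p.toAdd.2 • (1 + p.toAdd.1 • ε)
      map_one' := by simp
      map_mul' := fun p q => by
        ext <;> simp [pow_add]; ring }

lemma toDualNumber_single (p : ℂ × ℕ) (a : ℂ) :
    toDualNumber (AddMonoidAlgebra.single p a) = a • (0 : ℂ) ^ p.2 • (1 + p.1 • ε) :=
  AddMonoidAlgebra.lift_single _ _ _

lemma fst_toDualNumber (c : ExpPoly) : (toDualNumber c).fst = toDual c 1 := by
  induction c using AddMonoidAlgebra.induction_linear with
  | zero => simp
  | add c d hc hd => simp [hc, hd]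
  | single p a =>
    rw [toDual_single, LinearMap.smul_apply, ← augHom_apply, map_mul, map_pow]
    simp [toDualNumber_single, augHom_apply, xiD_apply_one, phiL_apply]

lemma isFinDual_toDual (c : ExpPoly) : IsFinDual (toDual c) := by
  refine ⟨Ideal.span {∏ q ∈ c.coeff.support, ((X : ℂ[X]) - Polynomial.C q.1) ^ (q.2 + 1)},
    ?_, fun p hp => ?_⟩
  · rw [Ne, Ideal.span_singleton_eq_bot]
    exact Finset.prod_ne_zero_iff.mpr fun q _ => pow_ne_zero _ (X_sub_C_ne_zero q.1)
  · rw [toDual_eq_sum, LinearMap.sum_apply]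
    refine Finset.sum_eq_zero fun q hq => ?_
    have hdvd : ((X : ℂ[X]) - Polynomial.C q.1) ^ (q.2 + 1) ∣ p :=
      (Finset.dvd_prod_of_mem (fun q : ℂ × ℕ => ((X : ℂ[X]) - Polynomial.C q.1) ^ (q.2 + 1))
        hq).trans (Ideal.mem_span_singleton.mp hp)
    rw [LinearMap.smul_apply, phiL_mul_xiD_pow_apply_eq_zero hdvd, smul_zero]

lemma toDual_injective : Function.Injective toDual := by
  rw [injective_iff_map_eq_zero]
  intro c hc
  set v : ℂ → DualP := fun μ =>
    ∑ q ∈ c.coeff.support with q.1 = μ, c.coeff q • (phiL q.1 * xiD ^ q.2) with hv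
  have hv_mem (μ : ℂ) : v μ ∈ dualMulX.maxGenEigenspace μ :=
    Submodule.sum_mem _ fun q hq => Submodule.smul_mem _ _ <|
      (Finset.mem_filter.mp hq).2 ▸ phiL_mul_xiD_pow_mem_maxGenEigenspace q.1 q.2
  have hv_sum : ∑ μ ∈ c.coeff.support.image Prod.fst, v μ = 0 := by
    rw [Finset.sum_image', ← toDual_eq_sum, hc]
    intro q _
    exact Finset.sum_congr (Finset.filter_congr fun r _ => by simp) fun _ _ => rfl
  have hv_zero := (iSupIndep_iff_finsetSum_eq_zero_imp_eq_zero _).mp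
    (Module.End.independent_maxGenEigenspace dualMulX) _ v (fun μ _ => hv_mem μ) hv_sum
  refine AddMonoidAlgebra.coeff_injective (Finsupp.ext fun q => ?_)
  by_contra hq
  have hq' : q ∈ c.coeff.support := by simpa using hq
  have key := LinearMap.congr_fun (hv_zero q.1 (Finset.mem_image_of_mem _ hq'))
    (((X : ℂ[X]) - Polynomial.C q.1) ^ q.2)
  rw [hv, LinearMap.sum_apply, Finset.sum_eq_single q] at key
  · simp [phiL_mul_xiD_pow_apply_X_sub_C_pow, Nat.factorial_ne_zero] at key
    exact Finsupp.mem_support_iff.mp hq' key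
  · intro r hr hrq
    obtain ⟨-, hr1⟩ := Finset.mem_filter.mp hr
    have hr2 : r.2 ≠ q.2 := fun h => hrq (Prod.ext hr1 h)
    simp [hr1, phiL_mul_xiD_pow_apply_X_sub_C_pow, hr2]
  · exact fun h => absurd (by simp [hq']) h

lemma phiL_mul_xiD_pow_mem_range_toDual (μ : ℂ) (j : ℕ) :
    phiL μ * xiD ^ j ∈ LinearMap.range toDual.toLinearMap :=
  ⟨AddMonoidAlgebra.single (μ, j) 1, by simp [toDual_single]⟩

lemma phiL_mul_xiD_pow_mem_map_range_toDual (z μ : ℂ) (j : ℕ) :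
    phiL μ * xiD ^ j ∈ (LinearMap.range toDual.toLinearMap).map (dualMulX - z • 1) := by
  obtain rfl | hμz := eq_or_ne μ z
  · have h := dualMulX_sub_smul_phiL_mul_xiD_pow μ μ (j + 1)
    rw [sub_self, zero_smul, zero_add, Nat.add_sub_cancel] at h
    rw [← inv_smul_smul₀ (Nat.cast_ne_zero.mpr j.succ_ne_zero : ((j + 1 : ℕ) : ℂ) ≠ 0)
      (phiL μ * xiD ^ j), ← h]
    exact Submodule.smul_mem _ _
      (Submodule.mem_map_of_mem (phiL_mul_xiD_pow_mem_range_toDual μ _))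
  · induction j with
    | zero =>
      have h := dualMulX_sub_smul_phiL_mul_xiD_pow z μ 0
      rw [Nat.cast_zero, zero_smul, add_zero] at h
      rw [← inv_smul_smul₀ (sub_ne_zero.mpr hμz) (phiL μ * xiD ^ 0), ← h, ← map_smul]
      exact Submodule.mem_map_of_mem
        (Submodule.smul_mem _ _ (phiL_mul_xiD_pow_mem_range_toDual μ _))
    | succ j ih =>
      have h := dualMulX_sub_smul_phiL_mul_xiD_pow z μ (j + 1)
      rw [Nat.add_sub_cancel] at h
      rw [← inv_smul_smul₀ (sub_ne_zero.mpr hμz) (phiL μ * xiD ^ (j + 1)),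
        eq_sub_of_add_eq h.symm]
      exact Submodule.smul_mem _ _ (Submodule.sub_mem _
        (Submodule.mem_map_of_mem (phiL_mul_xiD_pow_mem_range_toDual μ _))
        (Submodule.smul_mem _ _ ih))

lemma range_toDual_le_map_dualMulX_sub_smul (z : ℂ) :
    LinearMap.range toDual.toLinearMap
      ≤ (LinearMap.range toDual.toLinearMap).map (dualMulX - z • 1) := by
  rintro _ ⟨c, rfl⟩
  induction c using AddMonoidAlgebra.induction_linear with
  | zero => simp
  | add c d hc hd => simpa using Submodule.add_mem _ hc hd
  | single p a =>
    simpa [toDual_single] using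
      Submodule.smul_mem _ a (phiL_mul_xiD_pow_mem_map_range_toDual z p.1 p.2)

lemma mem_range_toDual_of_forall_apply_prod_mul_eq_zero (s : Multiset ℂ) {f : DualP}
    (hf : ∀ p, f ((s.map fun z => (X : ℂ[X]) - Polynomial.C z).prod * p) = 0) :
    f ∈ LinearMap.range toDual.toLinearMap := by
  induction s using Multiset.induction_on generalizing f with
  | empty =>
    have : f = 0 := LinearMap.ext fun p => by simpa using hf p
    exact this ▸ Submodule.zero_mem _
  | cons z s ih =>
    have hg : (dualMulX - z • 1) f ∈ LinearMap.range toDual.toLinearMap :=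
      ih fun p => by
        rw [dualMulX_sub_smul_apply, ← mul_assoc]
        simpa using hf p
    obtain ⟨h, hh, hfh⟩ := range_toDual_le_map_dualMulX_sub_smul z hg
    have hker : (dualMulX - z • 1) (f - h) = 0 := by rw [map_sub, hfh, sub_self]
    rw [← sub_add_cancel f h, eq_smul_phiL_of_dualMulX_sub_smul_eq_zero hker]
    refine Submodule.add_mem _ (Submodule.smul_mem _ _ ?_) hh
    simpa using phiL_mul_xiD_pow_mem_range_toDual z 0

lemma exists_toDual_eq_of_isFinDual {f : DualP} (hf : IsFinDual f) : ∃ c, toDual c = f := by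
  obtain ⟨I, hI, hfI⟩ := hf
  obtain ⟨q, hqI, hq⟩ := (Submodule.ne_bot_iff I).mp hI
  have hprod : Polynomial.C q.leadingCoeff⁻¹ * q
      = (q.roots.map fun z => (X : ℂ[X]) - Polynomial.C z).prod := by
    nth_rewrite 2 [← C_leadingCoeff_mul_prod_multiset_X_sub_C (p := q)
      IsAlgClosed.card_roots_eq_natDegree]
    rw [← mul_assoc, ← Polynomial.C_mul, inv_mul_cancel₀ (leadingCoeff_ne_zero.mpr hq),
      Polynomial.C_1, one_mul]
  exact mem_range_toDual_of_forall_apply_prod_mul_eq_zero q.roots fun p =>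
    hfI _ (hprod ▸ I.mul_mem_right p (I.mul_mem_left _ hqI))

lemma exists_toDualNumber_eq_zero_of_mem_JpowSet_two {y : DualP} (hy : y ∈ JpowSet 2) :
    ∃ c, toDual c = y ∧ toDualNumber c = 0 := by
  induction hy using AddSubmonoid.closure_induction with
  | mem y hy =>
    obtain ⟨g, hg, rfl⟩ := hy
    obtain ⟨c₀, hc₀⟩ := exists_toDual_eq_of_isFinDual (hg 0).1
    obtain ⟨c₁, hc₁⟩ := exists_toDual_eq_of_isFinDual (hg 1).1
    have hker (c : ExpPoly) (hc : toDual c 1 = 0) :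
        toDualNumber c ∈ TrivSqZeroExt.kerIdeal ℂ ℂ := by
      simpa [TrivSqZeroExt.kerIdeal, fst_toDualNumber] using hc
    refine ⟨c₀ * c₁, by rw [map_mul, hc₀, hc₁, Fin.prod_univ_two], ?_⟩
    have := Ideal.mul_mem_mul (hker c₀ (hc₀ ▸ (hg 0).2)) (hker c₁ (hc₁ ▸ (hg 1).2))
    rwa [← pow_two (TrivSqZeroExt.kerIdeal ℂ ℂ), TrivSqZeroExt.kerIdeal_sq, Ideal.mem_bot,
      ← map_mul] at this
  | zero => exact ⟨0, map_zero _, map_zero _⟩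
  | add y z _ _ hy hz =>
    obtain ⟨c, rfl, hc⟩ := hy
    obtain ⟨d, rfl, hd⟩ := hz
    exact ⟨c + d, map_add _ _ _, by rw [map_add, hc, hd, add_zero]⟩

lemma toDual_notMem_JpowSet_two {c : ExpPoly} (hc : (toDualNumber c).snd ≠ 0) :
    toDual c ∉ JpowSet 2 := fun h => by
  obtain ⟨d, hdc, hd⟩ := exists_toDualNumber_eq_zero_of_mem_JpowSet_two h
  exact hc (by rw [← toDual_injective hdc, hd, TrivSqZeroExt.snd_zero])

lemma JpowSet_two_subset :
    (JpowSet 2 : Set DualP) ⊆ {x : DualP | x ∈ Iaug ^ 2 ∧ IsFinDual x} := by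
  intro y hy
  refine ⟨?_, ?_⟩
  · refine (AddSubmonoid.closure_le (S := (Iaug ^ 2).toAddSubmonoid)).mpr ?_ hy
    rintro _ ⟨g, hg, rfl⟩
    rw [SetLike.mem_coe, Submodule.mem_toAddSubmonoid, Fin.prod_univ_two, pow_two]
    exact Ideal.mul_mem_mul (hg 0).2 (hg 1).2
  · obtain ⟨c, rfl, -⟩ := exists_toDualNumber_eq_zero_of_mem_JpowSet_two hy
    exact isFinDual_toDual c

end ExpPoly

/-- `φ₁ - ε ∉ J²`, although `φ₁ - ε - ξ ∈ I² ∩ ℂ[X]°`; hence `J² ⊊ I² ∩ ℂ[X]°`.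
Here `ε = 1` is the convolution unit, `J` the augmentation ideal of `ℂ[X]°` and `I` that
of `(ℂ[X])*`. -/
theorem J_squared_strictly_smaller :
    phiL 1 - 1 ∉ JpowSet 2
    ∧ (phiL 1 - 1 - xiD ∈ Iaug ^ 2 ∧ IsFinDual (phiL 1 - 1 - xiD))
    ∧ ((JpowSet 2 : Set DualP) ⊂ {x : DualP | x ∈ Iaug ^ 2 ∧ IsFinDual x}) := by
  set c : ExpPoly := AddMonoidAlgebra.single (1, 0) 1 - 1
  set c' : ExpPoly := c - AddMonoidAlgebra.single (0, 1) 1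
  have hc : ExpPoly.toDual c = phiL 1 - 1 := by simp [c, ExpPoly.toDual_single]
  have hc' : ExpPoly.toDual c' = phiL 1 - 1 - xiD := by
    simp [c', hc, ExpPoly.toDual_single, phiL_zero]
  have hφ : phiL 1 - 1 ∉ JpowSet 2 :=
    hc ▸ ExpPoly.toDual_notMem_JpowSet_two (by simp [c, ExpPoly.toDualNumber_single])
  have hφξ : phiL 1 - 1 - xiD ∉ JpowSet 2 :=
    hc' ▸ ExpPoly.toDual_notMem_JpowSet_two (by simp [c', c, ExpPoly.toDualNumber_single])
  have hI2 : phiL 1 - 1 - xiD ∈ Iaug ^ 2 :=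
    mem_Iaug_sq_of_apply_one_of_apply_X (by simp [phiL_apply, one_apply_one, xiD_apply_one])
      (by simp [phiL_apply, one_apply_X, xiD_apply_X])
  have hfin : IsFinDual (phiL 1 - 1 - xiD) := hc' ▸ ExpPoly.isFinDual_toDual c'
  exact ⟨hφ, ⟨hI2, hfin⟩,
    ExpPoly.JpowSet_two_subset.ssubset_of_not_subset fun h => hφξ (h ⟨hI2, hfin⟩)⟩
end

section
/- For every n ≥ 0 there is a linear isomorphism (ℂ[X])*/I^{n+1} ≅ (ℂ[X]_{≤n})*, where ℂ[X]_{≤n} is the space of polynomials of degree at most n; consequently the completion of (ℂ[X])* with respect to the I-adic topology, lim← (ℂ[X])*/I^n, is isomorphic to (ℂ[X])* itself, i.e., (ℂ[X])* is I-adically complete. -/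
open Polynomial PowerSeries Finset

/-!
The map `Θ f = ∑ₖ f(Xᵏ) Zᵏ / k!` is a ring isomorphism from `(ℂ[X])*` with the convolution
product onto `ℂ[[Z]]`, and it sends `I` to `(Z)`. Hence `Iᵐ` consists of the functionals killing
`1, X, …, X^(m-1)`, i.e. `Iⁿ⁺¹` is the annihilator of `ℂ[X]_{≤n}`, and dividing the full dual by
the annihilator of a subspace gives the dual of that subspace. Completeness follows from the same
description: a sequence that is Cauchy for the `I`-adic topology has eventually constant values
on each `Xᵏ`, and the functional with those values is its limit.
-/

noncomputable def eThetaRingEquiv : DualP ≃+* PowerSeries ℂ :=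
  { eTheta with
    map_add' := eTheta_add
    map_mul' := fun f g => eTheta.apply_symm_apply (eTheta f * eTheta g) }

lemma Iaug_map_eThetaRingEquiv :
    Iaug.map eThetaRingEquiv = Ideal.span {(PowerSeries.X : PowerSeries ℂ)} := by
  ext φ
  rw [Ideal.mem_map_of_equiv, Ideal.mem_span_singleton, PowerSeries.X_dvd_iff]
  constructor
  · rintro ⟨f, hf, rfl⟩
    simpa [eThetaRingEquiv, eTheta_apply, mem_Iaug_iff] using hf
  · intro h
    refine ⟨eTheta.symm φ, ?_, eTheta.apply_symm_apply φ⟩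
    simpa [mem_Iaug_iff, h] using eTheta_symm_apply_pow φ 0

lemma mem_Iaug_pow_iff (m : ℕ) (f : DualP) :
    f ∈ Iaug ^ m ↔ ∀ k < m, f ((X : Polynomial ℂ) ^ k) = 0 := by
  rw [← Ideal.apply_mem_of_equiv_iff (f := eThetaRingEquiv), Ideal.map_pow,
    Iaug_map_eThetaRingEquiv, Ideal.span_singleton_pow, Ideal.mem_span_singleton,
    PowerSeries.X_pow_dvd_iff]
  refine forall₂_congr fun k _ => ?_
  have hk : (k.factorial : ℂ) ≠ 0 := by exact_mod_cast Nat.factorial_ne_zero k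
  simp [eThetaRingEquiv, eTheta_apply, hk]

lemma restrictScalars_Iaug_pow_succ (n : ℕ) :
    (Iaug ^ (n + 1)).restrictScalars ℂ = (degreeLE ℂ n).dualAnnihilator := by
  ext f
  rw [Submodule.restrictScalars_mem, mem_Iaug_pow_iff, Submodule.mem_dualAnnihilator,
    degreeLE_eq_span_X_pow]
  change _ ↔ Submodule.span ℂ _ ≤ LinearMap.ker f
  simp [Submodule.span_le, Set.subset_def]

lemma smodEq_Iaug_pow_iff (m : ℕ) (f g : DualP) :
    f ≡ g [SMOD (Iaug ^ m • ⊤ : Submodule DualP DualP)] ↔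
      ∀ k < m, f ((X : Polynomial ℂ) ^ k) = g ((X : Polynomial ℂ) ^ k) := by
  simp only [SModEq.sub_mem, smul_eq_mul, Ideal.mul_top, mem_Iaug_pow_iff,
    LinearMap.sub_apply, sub_eq_zero]

lemma isHausdorff_Iaug : IsHausdorff Iaug DualP := by
  refine ⟨fun f hf => (basisMonomials ℂ).ext fun k => ?_⟩
  simpa [coe_basisMonomials, X_pow_eq_monomial] using
    (smodEq_Iaug_pow_iff (k + 1) f 0).mp (hf (k + 1)) k k.lt_succ_self

lemma isPrecomplete_Iaug : IsPrecomplete Iaug DualP := by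
  refine ⟨fun f hf => ⟨Phi fun k => f (k + 1) ((X : Polynomial ℂ) ^ k), fun n => ?_⟩⟩
  rw [smodEq_Iaug_pow_iff]
  intro k hk
  rw [Phi_apply]
  exact ((smodEq_Iaug_pow_iff _ _ _).mp (hf hk) k k.lt_succ_self).symm

/-- For every `n`, `(ℂ[X])*/Iⁿ⁺¹ ≅ (ℂ[X]_{≤n})*` as ℂ-vector spaces; consequently
`(ℂ[X])*` is `I`-adically complete. -/
theorem dual_adically_complete :
    (∀ n : ℕ,
      Nonempty ((DualP ⧸ (Iaug ^ (n + 1)).restrictScalars ℂ) ≃ₗ[ℂ]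
        Module.Dual ℂ (Polynomial.degreeLE ℂ (n : ℕ))))
    ∧ IsAdicComplete Iaug DualP :=
  ⟨fun n => ⟨(Submodule.quotEquivOfEq _ _ (restrictScalars_Iaug_pow_succ n)).trans
      (Subspace.quotAnnihilatorEquiv _)⟩,
    { toIsHausdorff := isHausdorff_Iaug, toIsPrecomplete := isPrecomplete_Iaug }⟩
end
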